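/- For every real h, the function α(h) = h ψ(h)/(2 Ψ(h)) − log Ψ(h) is nonnegative, where ψ and Ψ are the standard Gaussian density and CDF respectively. -/

import Mathlib

open MeasureTheory ProbabilityTheory Real

/-- Gaussian density N(z; m, s²). -/
noncomputable def gauss (m s2 z : ℝ) : ℝ :=
  (Real.sqrt (2 * Real.pi * s2))⁻¹ * Real.exp (-(z - m) ^ 2 / (2 * s2))

/-- Standard Gaussian density ψ. -/
noncomputable def stdPdf (t : ℝ) : ℝ := gauss 0 1 t

/-- Standard Gaussian CDF Ψ. -/
noncomputable def stdCdf (t : ℝ) : ℝ := ∫ u in Set.Iic t, stdPdf u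

/-!
The function α(h) = h ψ(h) / (2 Ψ(h)) − log Ψ(h) has derivative
−ψ(h) ((1 + h²) Ψ(h) + h ψ(h)) / (2 Ψ(h)²), which is nonpositive by the lower Mills-ratio bound
Ψ(h) ≥ −h ψ(h) / (1 + h²). So α is antitone, and for h ≥ 0 both of its terms are nonnegative;
hence α(h) ≥ α(max h 0) ≥ 0. The Mills bound holds because Ψ(h) + h ψ(h) / (1 + h²) has
derivative 2 ψ(h) / (1 + h²)² ≥ 0 and tends to 0 as h → −∞.
-/

open Filter Set Topology

lemma stdPdf_apply (t : ℝ) : stdPdf t = (√(2 * π))⁻¹ * exp (-t ^ 2 / 2) := by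
  simp [stdPdf, gauss]

lemma stdPdf_eq_gaussianPDFReal : stdPdf = gaussianPDFReal 0 1 := by
  ext t; simp [stdPdf, gauss, gaussianPDFReal]

lemma stdPdf_pos (t : ℝ) : 0 < stdPdf t := by
  rw [stdPdf_apply]; positivity

lemma integrable_stdPdf : Integrable stdPdf := by
  rw [stdPdf_eq_gaussianPDFReal]; exact integrable_gaussianPDFReal 0 1

lemma continuous_stdPdf : Continuous stdPdf := by
  simp_rw [funext stdPdf_apply]; fun_prop

lemma hasDerivAt_stdPdf (x : ℝ) : HasDerivAt stdPdf (-x * stdPdf x) x := by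
  have hexponent : HasDerivAt (fun u : ℝ => -u ^ 2 / 2) (-x) x :=
    ((hasDerivAt_pow 2 x).neg.div_const 2).congr_deriv (by ring)
  rw [funext stdPdf_apply]
  exact (hexponent.exp.const_mul _).congr_deriv (by ring)

lemma tendsto_stdPdf_atBot : Tendsto stdPdf atBot (𝓝 0) := by
  have h := (tendsto_rpow_abs_mul_exp_neg_mul_sq_cocompact (a := 1 / 2) (by norm_num) 0).mono_left
    atBot_le_cocompact
  simpa [funext stdPdf_apply, neg_div, div_eq_inv_mul] using h.const_mul (√(2 * π))⁻¹

lemma stdCdf_eq_cdf : stdCdf = cdf (gaussianReal 0 1) := by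
  ext x
  rw [cdf_eq_real, measureReal_def, gaussianReal_apply_eq_integral 0 one_ne_zero,
    ← stdPdf_eq_gaussianPDFReal, ENNReal.toReal_ofReal
      (setIntegral_nonneg measurableSet_Iic fun u _ => (stdPdf_pos u).le), stdCdf]

lemma stdCdf_pos (x : ℝ) : 0 < stdCdf x := by
  have hsupp : Function.support stdPdf ∩ Iic x = Iic x :=
    inter_eq_self_of_subset_right fun u _ => (stdPdf_pos u).ne'
  rw [stdCdf, setIntegral_pos_iff_support_of_nonneg_ae
    (Eventually.of_forall fun u => (stdPdf_pos u).le) integrable_stdPdf.integrableOn,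
    hsupp, Real.volume_Iic]
  simp

lemma hasDerivAt_stdCdf (x : ℝ) : HasDerivAt stdCdf (stdPdf x) x := by
  have hsplit : stdCdf = fun u => stdCdf 0 + ∫ t in (0 : ℝ)..u, stdPdf t := by
    ext u
    rw [← intervalIntegral.integral_Iic_sub_Iic integrable_stdPdf.integrableOn
      integrable_stdPdf.integrableOn, stdCdf, stdCdf]
    ring
  rw [hsplit]
  exact (intervalIntegral.integral_hasDerivAt_right integrable_stdPdf.intervalIntegrable
    (continuous_stdPdf.stronglyMeasurableAtFilter _ _) continuous_stdPdf.continuousAt).const_add _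

lemma stdCdf_le_one (x : ℝ) : stdCdf x ≤ 1 := by
  rw [stdCdf_eq_cdf]; exact cdf_le_one _ x

lemma tendsto_stdCdf_atBot : Tendsto stdCdf atBot (𝓝 0) := by
  rw [stdCdf_eq_cdf]; exact tendsto_cdf_atBot _

lemma tendsto_mul_stdPdf_div_one_add_sq_atBot :
    Tendsto (fun u => u * stdPdf u / (1 + u ^ 2)) atBot (𝓝 0) := by
  refine squeeze_zero_norm (fun u => ?_) tendsto_stdPdf_atBot
  have hψ := stdPdf_pos u
  have hden : (0 : ℝ) < 1 + u ^ 2 := by positivity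
  rw [Real.norm_eq_abs, abs_div, abs_mul, abs_of_pos hψ, abs_of_pos hden, div_le_iff₀ hden]
  nlinarith [sq_abs u, sq_nonneg (|u| - 1)]

lemma hasDerivAt_stdCdf_add_mul_stdPdf_div_one_add_sq (x : ℝ) :
    HasDerivAt (fun u => stdCdf u + u * stdPdf u / (1 + u ^ 2))
      (2 * stdPdf x / (1 + x ^ 2) ^ 2) x := by
  have hsq : HasDerivAt (fun u : ℝ => 1 + u ^ 2) (2 * x) x :=
    ((hasDerivAt_pow 2 x).const_add 1).congr_deriv (by ring)
  have hquot := ((hasDerivAt_id' x).fun_mul (hasDerivAt_stdPdf x)).fun_div hsq (by positivity)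
  exact ((hasDerivAt_stdCdf x).add hquot).congr_deriv (by field_simp; ring)

lemma one_add_sq_mul_stdCdf_add_mul_stdPdf_nonneg (x : ℝ) :
    0 ≤ (1 + x ^ 2) * stdCdf x + x * stdPdf x := by
  have hmono : Monotone fun u => stdCdf u + u * stdPdf u / (1 + u ^ 2) :=
    monotone_of_hasDerivAt_nonneg hasDerivAt_stdCdf_add_mul_stdPdf_div_one_add_sq
      fun u => div_nonneg (mul_nonneg zero_le_two (stdPdf_pos u).le) (by positivity)
  have hlim : Tendsto (fun u => stdCdf u + u * stdPdf u / (1 + u ^ 2)) atBot (𝓝 0) := by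
    simpa using tendsto_stdCdf_atBot.add tendsto_mul_stdPdf_div_one_add_sq_atBot
  have hpos : (0 : ℝ) < 1 + x ^ 2 := by positivity
  calc 0 ≤ (1 + x ^ 2) * (stdCdf x + x * stdPdf x / (1 + x ^ 2)) :=
        mul_nonneg hpos.le (hmono.le_of_tendsto hlim x)
    _ = (1 + x ^ 2) * stdCdf x + x * stdPdf x := by field_simp

noncomputable def mesAcquisition (h : ℝ) : ℝ :=
  h * stdPdf h / (2 * stdCdf h) - log (stdCdf h)

lemma hasDerivAt_mesAcquisition (x : ℝ) :
    HasDerivAt mesAcquisition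
      (-(stdPdf x * ((1 + x ^ 2) * stdCdf x + x * stdPdf x)) / (2 * stdCdf x ^ 2)) x := by
  have hΨ := stdCdf_pos x
  have hquot := ((hasDerivAt_id' x).fun_mul (hasDerivAt_stdPdf x)).fun_div
    ((hasDerivAt_stdCdf x).const_mul 2) (by positivity)
  exact (hquot.sub ((hasDerivAt_stdCdf x).log hΨ.ne')).congr_deriv (by field_simp; ring)

lemma antitone_mesAcquisition : Antitone mesAcquisition :=
  antitone_of_hasDerivAt_nonpos hasDerivAt_mesAcquisition fun x =>
    div_nonpos_of_nonpos_of_nonneg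
      (neg_nonpos.2 (mul_nonneg (stdPdf_pos x).le (one_add_sq_mul_stdCdf_add_mul_stdPdf_nonneg x)))
      (by positivity)

lemma mesAcquisition_nonneg_of_nonneg {h : ℝ} (hh : 0 ≤ h) : 0 ≤ mesAcquisition h := by
  have hΨ := stdCdf_pos h
  have hratio : 0 ≤ h * stdPdf h / (2 * stdCdf h) := by
    have := stdPdf_pos h; positivity
  have hlog : log (stdCdf h) ≤ 0 := log_nonpos hΨ.le (stdCdf_le_one h)
  rw [mesAcquisition]; linarith

theorem stmt_9 (h : ℝ) :
    0 ≤ h * stdPdf h / (2 * stdCdf h) - Real.log (stdCdf h) := by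
  rcases le_total 0 h with hh | hh
  · exact mesAcquisition_nonneg_of_nonneg hh
  · exact (mesAcquisition_nonneg_of_nonneg le_rfl).trans (antitone_mesAcquisition hh)
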